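/- The complex surface X = {(x,y,z) ∈ ℂ³ : y·(x²+(y−z²)²−z⁴) = 0} is not Lipschitz normally embedded at 0: for any C ≥ 1, fixing r ∈ (0,1), the curves α(t) = (t, 0, r) and β(t) = (t, r² − √(r⁴−t²), r) for t ∈ (0, r²) lie in X, satisfy ‖α(t)−β(t)‖ = r² − √(r⁴−t²) and d_X(α(t),β(t)) ≥ t, and the ratio d_X/‖·‖ is unbounded as t → 0⁺. -/

import Mathlib

/-!
`X16` is the union of the plane `{y = 0}` and the sheet `{x² + (y − z²)² = z⁴}`, two closed sets
that meet only where `x = 0`. The curve `α(t)` lies on the plane and `β(t)` on the sheet off the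
plane, so by connectedness of `[0,1]` every path in `X16` from `α(t)` to `β(t)` passes through
`{x = 0}` and has length at least `t`, the first coordinate of `α(t)`. On the other hand
`‖α(t) − β(t)‖ = r² − √(r⁴ − t²) ≤ t²/r² = o(t)`.
-/

open Set Filter Metric

/-- Length of a path `γ : [0,1] → E` measured via the (extended) variation. -/
noncomputable def pathLength {E : Type*} [NormedAddCommGroup E] (γ : ℝ → E) : ENNReal :=
  eVariationOn γ (Set.Icc 0 1)

/-- `γ` is a path in `X` from `x` to `y`, parametrized on `[0,1]`. -/
def IsPathIn {E : Type*} [NormedAddCommGroup E] (X : Set E) (x y : E) (γ : ℝ → E) : Prop :=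
  ContinuousOn γ (Set.Icc 0 1) ∧ Set.MapsTo γ (Set.Icc 0 1) X ∧ γ 0 = x ∧ γ 1 = y

/-- The inner (length) distance on `X`: the infimum of the lengths of paths in `X`
joining `x` to `y`. -/
noncomputable def innerDist {E : Type*} [NormedAddCommGroup E] (X : Set E) (x y : E) : ENNReal :=
  ⨅ γ ∈ {γ : ℝ → E | IsPathIn X x y γ}, pathLength γ

/-- Points of `ℂ³` from three coordinates. -/
noncomputable def mkc3 (a b c : ℂ) : EuclideanSpace ℂ (Fin 3) :=
  (WithLp.equiv 2 (Fin 3 → ℂ)).symm ![a, b, c]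

/-- The complex surface `X = {(x,y,z) ∈ ℂ³ : y·(x²+(y−z²)²−z⁴) = 0}` of Example 3.14. -/
def X16 : Set (EuclideanSpace ℂ (Fin 3)) :=
  {p | p 1 * ((p 0) ^ 2 + (p 1 - (p 2) ^ 2) ^ 2 - (p 2) ^ 4) = 0}

noncomputable def a16 (r t : ℝ) : EuclideanSpace ℂ (Fin 3) := mkc3 (t : ℂ) 0 (r : ℂ)

noncomputable def b16 (r t : ℝ) : EuclideanSpace ℂ (Fin 3) :=
  mkc3 (t : ℂ) ((r ^ 2 - Real.sqrt (r ^ 4 - t ^ 2) : ℝ) : ℂ) (r : ℂ)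

section InnerDist

variable {E : Type*} [NormedAddCommGroup E] {X Y : Set E} {x y : E} {γ : ℝ → E}

theorem IsPathIn.mono (hγ : IsPathIn X x y γ) (hXY : X ⊆ Y) : IsPathIn Y x y γ :=
  ⟨hγ.1, hγ.2.1.mono_right hXY, hγ.2.2⟩

theorem innerDist_anti (hXY : X ⊆ Y) (x y : E) : innerDist Y x y ≤ innerDist X x y :=
  le_iInf₂ fun γ hγ => iInf₂_le γ (hγ.mono hXY)

theorem IsPathIn.edist_le_pathLength (hγ : IsPathIn X x y γ) {s : ℝ} (hs : s ∈ Icc 0 1) :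
    edist x (γ s) ≤ pathLength γ :=
  hγ.2.2.1 ▸ eVariationOn.edist_le γ (left_mem_Icc.2 zero_le_one) hs

theorem IsPathIn.exists_mem_inter {A B : Set E} (hA : IsClosed A) (hB : IsClosed B)
    (hγ : IsPathIn (A ∪ B) x y γ) (hx : x ∈ A) (hy : y ∈ B) :
    ∃ s ∈ Icc (0 : ℝ) 1, γ s ∈ A ∩ B := by
  obtain ⟨hcont, hmaps, rfl, rfl⟩ := hγ
  obtain ⟨_, ⟨s, hs, rfl⟩, hsAB⟩ :=
    isPreconnected_closed_iff.1 (isPreconnected_Icc.image γ hcont) A B hA hB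
      hmaps.image_subset ⟨γ 0, mem_image_of_mem γ (left_mem_Icc.2 zero_le_one), hx⟩
      ⟨γ 1, mem_image_of_mem γ (right_mem_Icc.2 zero_le_one), hy⟩
  exact ⟨s, hs, hsAB⟩

theorem infEDist_le_innerDist {Z : Set E}
    (hZ : ∀ γ, IsPathIn X x y γ → ∃ s ∈ Icc (0 : ℝ) 1, γ s ∈ Z) :
    infEDist x Z ≤ innerDist X x y :=
  le_iInf₂ fun γ hγ => by
    obtain ⟨s, hs, hsZ⟩ := hZ γ hγ
    exact (infEDist_le_edist_of_mem hsZ).trans (hγ.edist_le_pathLength hs)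

end InnerDist

section Coordinates

@[simp] theorem mkc3_apply_zero (a b c : ℂ) : mkc3 a b c 0 = a := rfl
@[simp] theorem mkc3_apply_one (a b c : ℂ) : mkc3 a b c 1 = b := rfl
@[simp] theorem mkc3_apply_two (a b c : ℂ) : mkc3 a b c 2 = c := rfl

theorem mkc3_sub_mkc3 (a b c a' b' c' : ℂ) :
    mkc3 a b c - mkc3 a' b' c' = mkc3 (a - a') (b - b') (c - c') := by
  ext i; fin_cases i <;> rfl

theorem norm_mkc3 (a b c : ℂ) : ‖mkc3 a b c‖ = √(‖a‖ ^ 2 + ‖b‖ ^ 2 + ‖c‖ ^ 2) := by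
  rw [EuclideanSpace.norm_eq, Fin.sum_univ_three]; rfl

theorem norm_mkc3_le (a b c : ℂ) : ‖mkc3 a b c‖ ≤ ‖a‖ + ‖b‖ + ‖c‖ := by
  rw [norm_mkc3, Real.sqrt_le_left (by positivity)]
  nlinarith [mul_nonneg (norm_nonneg a) (norm_nonneg b), mul_nonneg (norm_nonneg b) (norm_nonneg c),
    mul_nonneg (norm_nonneg a) (norm_nonneg c)]

end Coordinates

section Surface

def planeY : Set (EuclideanSpace ℂ (Fin 3)) := {p | p 1 = 0}

def quarticSheet : Set (EuclideanSpace ℂ (Fin 3)) :=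
  {p | p 0 ^ 2 + (p 1 - p 2 ^ 2) ^ 2 - p 2 ^ 4 = 0}

theorem X16_eq_union : X16 = planeY ∪ quarticSheet := by
  ext p; exact mul_eq_zero

theorem isClosed_planeY : IsClosed planeY := isClosed_eq (by fun_prop) continuous_const

theorem isClosed_quarticSheet : IsClosed quarticSheet :=
  isClosed_eq (by fun_prop) continuous_const

theorem planeY_inter_quarticSheet_subset : planeY ∩ quarticSheet ⊆ {p | p 0 = 0} := by
  rintro p ⟨hy, hq⟩
  change p 1 = 0 at hy
  change p 0 ^ 2 + (p 1 - p 2 ^ 2) ^ 2 - p 2 ^ 4 = 0 at hq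
  exact pow_eq_zero_iff two_ne_zero |>.1 (by linear_combination hq - (p 1 - 2 * p 2 ^ 2) * hy)

end Surface

section Curves

variable {r t : ℝ}

theorem sq_lt_pow_four (ht : t ∈ Ioo 0 (r ^ 2)) : t ^ 2 < r ^ 4 := by
  nlinarith [ht.1, ht.2]

theorem sub_sqrt_pos (hr : 0 < r) (ht : t ∈ Ioo 0 (r ^ 2)) : 0 < r ^ 2 - √(r ^ 4 - t ^ 2) := by
  rw [sub_pos, Real.sqrt_lt' (by positivity)]
  nlinarith [ht.1]

theorem sub_sqrt_le_sq_div (hr : 0 < r) (ht : t ∈ Ioo 0 (r ^ 2)) :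
    r ^ 2 - √(r ^ 4 - t ^ 2) ≤ t ^ 2 / r ^ 2 := by
  have hs : √(r ^ 4 - t ^ 2) ^ 2 = r ^ 4 - t ^ 2 :=
    Real.sq_sqrt (sub_nonneg.2 (sq_lt_pow_four ht).le)
  rw [le_div_iff₀ (by positivity)]
  nlinarith [Real.sqrt_nonneg (r ^ 4 - t ^ 2), sub_sqrt_pos hr ht]

theorem a16_mem_planeY : a16 r t ∈ planeY := rfl

theorem b16_mem_quarticSheet (ht : t ∈ Ioo 0 (r ^ 2)) : b16 r t ∈ quarticSheet := by
  have hs : ((√(r ^ 4 - t ^ 2) : ℝ) : ℂ) ^ 2 = (r : ℂ) ^ 4 - (t : ℂ) ^ 2 := by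
    exact_mod_cast Real.sq_sqrt (sub_nonneg.2 (sq_lt_pow_four ht).le)
  change (t : ℂ) ^ 2 + (((r ^ 2 - √(r ^ 4 - t ^ 2) : ℝ) : ℂ) - (r : ℂ) ^ 2) ^ 2 - (r : ℂ) ^ 4 = 0
  push_cast
  linear_combination hs

theorem a16_mem_X16 : a16 r t ∈ X16 := X16_eq_union ▸ mem_union_left _ a16_mem_planeY

theorem b16_mem_X16 (ht : t ∈ Ioo 0 (r ^ 2)) : b16 r t ∈ X16 :=
  X16_eq_union ▸ mem_union_right _ (b16_mem_quarticSheet ht)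

theorem norm_a16_sub_b16 (hr : 0 < r) (ht : t ∈ Ioo 0 (r ^ 2)) :
    ‖a16 r t - b16 r t‖ = r ^ 2 - √(r ^ 4 - t ^ 2) := by
  rw [a16, b16, mkc3_sub_mkc3, norm_mkc3]
  simp only [sub_self, zero_sub, norm_zero, norm_neg, Complex.norm_real, Real.norm_eq_abs,
    sq_abs, ne_eq, OfNat.ofNat_ne_zero, not_false_eq_true, zero_pow, zero_add, add_zero]
  exact Real.sqrt_sq (sub_sqrt_pos hr ht).le

theorem norm_a16_lt (hr : r ∈ Ioo 0 1) (ht : t ∈ Ioo 0 (r ^ 2)) : ‖a16 r t‖ < 3 * r := by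
  refine (norm_mkc3_le _ _ _).trans_lt ?_
  simp only [Complex.norm_real, Real.norm_eq_abs, norm_zero, abs_of_pos ht.1, abs_of_pos hr.1]
  nlinarith [ht.2, hr.1, hr.2]

theorem norm_b16_lt (hr : r ∈ Ioo 0 1) (ht : t ∈ Ioo 0 (r ^ 2)) : ‖b16 r t‖ < 3 * r := by
  refine (norm_mkc3_le _ _ _).trans_lt ?_
  simp only [Complex.norm_real, Real.norm_eq_abs, abs_of_pos ht.1, abs_of_pos hr.1,
    abs_of_pos (sub_sqrt_pos hr.1 ht)]
  nlinarith [ht.2, hr.1, hr.2, Real.sqrt_nonneg (r ^ 4 - t ^ 2)]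

theorem ofReal_le_innerDist_a16_b16 (ht : t ∈ Ioo 0 (r ^ 2)) :
    ENNReal.ofReal t ≤ innerDist X16 (a16 r t) (b16 r t) := by
  calc ENNReal.ofReal t ≤ infEDist (a16 r t) {p | p 0 = 0} := le_infEDist.2 fun p hp => by
        rw [edist_dist, dist_eq_norm]
        refine ENNReal.ofReal_le_ofReal ((le_of_eq ?_).trans (PiLp.norm_apply_le _ 0))
        rw [PiLp.sub_apply, hp, sub_zero, a16, mkc3_apply_zero, Complex.norm_real,
          Real.norm_of_nonneg ht.1.le]
    _ ≤ innerDist X16 (a16 r t) (b16 r t) := infEDist_le_innerDist fun γ hγ => by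
        obtain ⟨s, hs, hγs⟩ := (X16_eq_union ▸ hγ).exists_mem_inter isClosed_planeY
          isClosed_quarticSheet a16_mem_planeY (b16_mem_quarticSheet ht)
        exact ⟨s, hs, planeY_inter_quarticSheet_subset hγs⟩

theorem exists_ofReal_mul_norm_lt_innerDist {C : ℝ} (hC : 0 < C) (hr : 0 < r) :
    ∃ t ∈ Ioo 0 (r ^ 2),
      ENNReal.ofReal (C * ‖a16 r t - b16 r t‖) < innerDist X16 (a16 r t) (b16 r t) := by
  set t := r ^ 2 / (2 * C + 1) with ht_def
  have ht : t ∈ Ioo 0 (r ^ 2) := ⟨by positivity, div_lt_self (by positivity) (by linarith)⟩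
  refine ⟨t, ht, ((ENNReal.ofReal_lt_ofReal_iff ht.1).2 ?_).trans_le
    (ofReal_le_innerDist_a16_b16 ht)⟩
  calc C * ‖a16 r t - b16 r t‖ ≤ C * (t ^ 2 / r ^ 2) := by
        rw [norm_a16_sub_b16 hr ht]; gcongr; exact sub_sqrt_le_sq_div hr ht
    _ = C / (2 * C + 1) * t := by rw [ht_def]; field_simp
    _ < t := mul_lt_of_lt_one_left ht.1 ((div_lt_one (by positivity)).2 (by linarith))

end Curves

/-- `X16` is not Lipschitz normally embedded at `0`: the witness curves
`α, β` lie in `X16`, `‖α(t) − β(t)‖ = r² − √(r⁴−t²)`, `d_X(α(t), β(t)) ≥ t`, the ratio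
`d_X/‖·‖` is unbounded as `t → 0⁺`, and consequently no neighborhood of `0` in `X16` is
Lipschitz normally embedded. -/
theorem stmt16 :
    (∀ r ∈ Set.Ioo (0 : ℝ) 1, ∀ t ∈ Set.Ioo (0 : ℝ) (r ^ 2),
      a16 r t ∈ X16 ∧ b16 r t ∈ X16 ∧
      ‖a16 r t - b16 r t‖ = r ^ 2 - Real.sqrt (r ^ 4 - t ^ 2) ∧
      ENNReal.ofReal t ≤ innerDist X16 (a16 r t) (b16 r t)) ∧
    (∀ C : ℝ, 1 ≤ C → ∀ r ∈ Set.Ioo (0 : ℝ) 1, ∃ t ∈ Set.Ioo (0 : ℝ) (r ^ 2),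
      ENNReal.ofReal (C * ‖a16 r t - b16 r t‖) < innerDist X16 (a16 r t) (b16 r t)) ∧
    (∀ U : Set (EuclideanSpace ℂ (Fin 3)), IsOpen U → (0 : EuclideanSpace ℂ (Fin 3)) ∈ U →
      ¬ ∃ C : ℝ, 1 ≤ C ∧ ∀ p ∈ X16 ∩ U, ∀ q ∈ X16 ∩ U,
        innerDist (X16 ∩ U) p q ≤ ENNReal.ofReal (C * ‖p - q‖)) := by
  refine ⟨fun r hr t ht => ⟨a16_mem_X16, b16_mem_X16 ht, norm_a16_sub_b16 hr.1 ht,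
      ofReal_le_innerDist_a16_b16 ht⟩, fun C hC r hr =>
      exists_ofReal_mul_norm_lt_innerDist (one_pos.trans_le hC) hr.1, ?_⟩
  rintro U hU h0U ⟨C, hC, hLNE⟩
  obtain ⟨ε, hε, hball⟩ := Metric.isOpen_iff.1 hU 0 h0U
  set r := min (ε / 3) (1 / 2)
  have hr : r ∈ Ioo (0 : ℝ) 1 := ⟨by positivity, (min_le_right _ _).trans_lt (by norm_num)⟩
  have hU_of_norm_lt {p : EuclideanSpace ℂ (Fin 3)} (hp : ‖p‖ < 3 * r) : p ∈ U :=
    hball (mem_ball_zero_iff.2 (hp.trans_le (by linarith [min_le_left (ε / 3) (1 / 2)])))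
  obtain ⟨t, ht, hlt⟩ := exists_ofReal_mul_norm_lt_innerDist (one_pos.trans_le hC) hr.1
  have hle := hLNE _ ⟨a16_mem_X16, hU_of_norm_lt (norm_a16_lt hr ht)⟩
    _ ⟨b16_mem_X16 ht, hU_of_norm_lt (norm_b16_lt hr ht)⟩
  exact (hlt.trans_le ((innerDist_anti inter_subset_left _ _).trans hle)).false
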